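/- arXiv:2204.12234 — 10 statements merged into one kernel-verified Lean document; each statement's English description precedes it below -/
import Mathlib

section
/- Every direct summand of a Σ-dual Rickart module is a Σ-dual Rickart module. Precisely: if M is a Σ-dual Rickart R-module and N is a submodule of M admitting a complementary submodule, then N is a Σ-dual Rickart module. -/
/-!
If `i : N → M` and `p : M → N` exhibit `N` as a retract of `M`, an endomorphism `φ` of `N`
extends to the endomorphism `i ∘ φ ∘ p` of `M`, whose image is `i (im φ)`. A complement `Q` of
that image in `M` pulls back along the injective map `i` to a complement of `im φ` in `N`.
Taking finitely supported families, `N^(Λ)` is a retract of `M^(Λ)` whenever `N` is a direct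
summand of `M`.
-/

universe u v

/-- A module `M` is dual-Rickart if the image of every endomorphism is a direct summand. -/
def IsDualRickart (R : Type u) [Ring R] (M : Type v) [AddCommGroup M] [Module R M] : Prop :=
  ∀ φ : M →ₗ[R] M, ∃ q : Submodule R M, IsCompl (LinearMap.range φ) q

/-- A module `M` is Σ-dual Rickart if every direct sum of copies of `M` is dual-Rickart. -/
def IsSigmaDualRickart (R : Type u) [Ring R] (M : Type v) [AddCommGroup M] [Module R M] :
    Prop :=
  ∀ Λ : Type v, IsDualRickart R (Λ →₀ M)

namespace Submodule

variable {R A B : Type*} [Ring R] [AddCommGroup A] [Module R A] [AddCommGroup B] [Module R B]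

theorem isCompl_comap_of_isCompl_map {f : A →ₗ[R] B} (hf : Function.Injective f)
    {S : Submodule R A} {Q : Submodule R B} (h : IsCompl (S.map f) Q) :
    IsCompl S (Q.comap f) where
  disjoint := by
    rw [disjoint_iff, ← comap_map_eq_of_injective hf S, ← comap_inf, h.inf_eq_bot, comap_bot,
      LinearMap.ker_eq_bot.mpr hf]
  codisjoint := by
    have hle : ⊤ ≤ (S ⊔ Q.comap f).map f ⊔ Q :=
      h.sup_eq_top ▸ sup_le_sup_right (map_mono le_sup_left) Q
    have hQS : Q.comap f ≤ S ⊔ Q.comap f := le_sup_right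
    rw [codisjoint_iff, ← comap_map_sup_of_comap_le hQS, top_le_iff.mp hle, comap_top]

end Submodule

section Retract

variable {R : Type u} [Ring R]

theorem IsDualRickart.of_retract {M N : Type*} [AddCommGroup M] [Module R M] [AddCommGroup N]
    [Module R N] (hM : IsDualRickart R M) (i : N →ₗ[R] M) (p : M →ₗ[R] N)
    (hpi : p ∘ₗ i = LinearMap.id) : IsDualRickart R N := by
  intro φ
  have hi : Function.Injective i := Function.LeftInverse.injective (LinearMap.congr_fun hpi)
  have hp : Function.Surjective p := Function.RightInverse.surjective (LinearMap.congr_fun hpi)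
  obtain ⟨Q, hQ⟩ := hM (i ∘ₗ φ ∘ₗ p)
  have hrange : LinearMap.range (i ∘ₗ φ ∘ₗ p) = (LinearMap.range φ).map i := by
    rw [LinearMap.range_comp, LinearMap.range_comp, LinearMap.range_eq_top.mpr hp,
      Submodule.map_top]
  rw [hrange] at hQ
  exact ⟨Q.comap i, Submodule.isCompl_comap_of_isCompl_map hi hQ⟩

theorem IsSigmaDualRickart.of_retract {M N : Type v} [AddCommGroup M] [Module R M]
    [AddCommGroup N] [Module R N] (hM : IsSigmaDualRickart R M) (i : N →ₗ[R] M)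
    (p : M →ₗ[R] N) (hpi : p ∘ₗ i = LinearMap.id) : IsSigmaDualRickart R N := fun Λ ↦
  (hM Λ).of_retract (Finsupp.mapRange.linearMap i) (Finsupp.mapRange.linearMap p) <| by
    rw [← Finsupp.mapRange.linearMap_comp, hpi, Finsupp.mapRange.linearMap_id]

end Retract

/-- A direct summand of a Σ-dual Rickart module is Σ-dual Rickart. -/
theorem stmt1 (R : Type u) [Ring R] (M : Type v) [AddCommGroup M] [Module R M]
    (hM : IsSigmaDualRickart R M) (N N' : Submodule R M) (h : IsCompl N N') :
    IsSigmaDualRickart R N :=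
  hM.of_retract N.subtype (N.projectionOnto N' h) (Submodule.projectionOnto_comp_subtype h)
end

section
/- If M is a Σ-dual Rickart R-module, then for any index sets Λ₁ and Λ₂, the module M^(Λ₁) is M^(Λ₂)-dual Rickart; that is, for every module homomorphism f : M^(Λ₁) → M^(Λ₂), the image of f is a direct summand of M^(Λ₂). -/
universe u v

/-
The map `f : M^(Λ₁) → M^(Λ₂)` becomes the endomorphism `(x, y) ↦ (0, f x)` of
`M^(Λ₁) × M^(Λ₂) ≅ M^(Λ₁ ⊕ Λ₂)`, whose image `0 × im f` is a direct summand by hypothesis.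
Pulling a complement back along the injection `M^(Λ₂) → M^(Λ₁) × M^(Λ₂)` gives a complement
of `im f`.
-/

variable {R : Type*} [Ring R] {A B C : Type*} [AddCommGroup A] [Module R A]
  [AddCommGroup B] [Module R B] [AddCommGroup C] [Module R C]

theorem Submodule.isCompl_comap_of_isCompl_map_s3 {g : B →ₗ[R] C} (hg : Function.Injective g)
    {p : Submodule R B} {q : Submodule R C} (h : IsCompl (p.map g) q) :
    IsCompl p (q.comap g) := by
  constructor
  · rw [Submodule.disjoint_def]
    intro x hxp hxq
    exact hg <| by
      simpa using Submodule.disjoint_def.mp h.disjoint _ (Submodule.mem_map_of_mem hxp) hxq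
  · rw [codisjoint_iff, eq_top_iff]
    intro y _
    obtain ⟨_, ⟨x, hx, rfl⟩, c, hc, hxc⟩ :=
      Submodule.mem_sup.mp (h.codisjoint.eq_top ▸ Submodule.mem_top : g y ∈ p.map g ⊔ q)
    have hc' : c = g (y - x) := by rw [map_sub, ← hxc, add_sub_cancel_left]
    refine Submodule.mem_sup.mpr ⟨x, hx, y - x, ?_, add_sub_cancel x y⟩
    rw [Submodule.mem_comap, ← hc']
    exact hc

theorem IsDualRickart.of_linearEquiv (h : IsDualRickart R A) (e : A ≃ₗ[R] B) :
    IsDualRickart R B := by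
  intro φ
  obtain ⟨q, hq⟩ := h (e.symm.toLinearMap ∘ₗ φ ∘ₗ e.toLinearMap)
  rw [LinearMap.range_comp, LinearMap.range_comp, LinearEquiv.range, Submodule.map_top] at hq
  refine ⟨q.map (e : A →ₗ[R] B), ?_⟩
  simpa [← Submodule.map_comp] using (Submodule.orderIsoMapComap e).isCompl hq

theorem IsDualRickart.exists_isCompl_range_of_prod (h : IsDualRickart R (A × B))
    (f : A →ₗ[R] B) : ∃ q : Submodule R B, IsCompl (LinearMap.range f) q := by
  obtain ⟨q, hq⟩ := h (LinearMap.inr R A B ∘ₗ f ∘ₗ LinearMap.fst R A B)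
  rw [LinearMap.range_comp, LinearMap.range_comp, LinearMap.range_eq_top.2 Prod.fst_surjective,
    Submodule.map_top] at hq
  exact ⟨_, Submodule.isCompl_comap_of_isCompl_map_s3 LinearMap.inr_injective hq⟩

/-- If `M` is Σ-dual Rickart then `M^(Λ₁)` is `M^(Λ₂)`-dual Rickart for all index sets. -/
theorem stmt3 (R : Type u) [Ring R] (M : Type v) [AddCommGroup M] [Module R M]
    (hM : IsSigmaDualRickart R M) (Λ₁ Λ₂ : Type v)
    (f : (Λ₁ →₀ M) →ₗ[R] (Λ₂ →₀ M)) :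
    ∃ q : Submodule R (Λ₂ →₀ M), IsCompl (LinearMap.range f) q := by
  have hprod : IsDualRickart R ((Λ₁ →₀ M) × (Λ₂ →₀ M)) :=
    (hM (Λ₁ ⊕ Λ₂)).of_linearEquiv (Finsupp.sumFinsuppLEquivProdFinsupp R)
  exact hprod.exists_isCompl_range_of_prod f
end

section
/- Let R be a Noetherian ring and M a cohereditary R-module, i.e., every quotient module of M is injective. Then M is a Σ-dual Rickart module. -/
/-! Over a Noetherian ring a module is injective as soon as each of its finitely generated
submodules lies in an injective submodule: in the Zorn argument behind Baer's criterion, extending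
a maximal partial map past `y` only requires extending its restriction to the finitely generated
module `dom ∩ R ∙ y`, whose image is finitely generated. A quotient of `Λ →₀ M` is the sum of the
images of the copies of `M`, and a finite sum of them is a quotient of a finite power of `M`, which
is again cohereditary since an extension of injective modules splits. Hence every quotient of
`Λ →₀ M` is injective; the image of an endomorphism is isomorphic to such a quotient, so it is an
injective submodule and therefore a direct summand. -/

universe u v

namespace Module

variable {R : Type u} [Ring R]

section Injective

variable {A B : Type v} [AddCommGroup A] [AddCommGroup B] [Module R A] [Module R B]

theorem Injective.of_linearEquiv [Module.Injective R A] (e : A ≃ₗ[R] B) :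
    Module.Injective R B where
  out _ _ _ _ _ _ f hf g := by
    obtain ⟨h, hh⟩ := Module.Injective.out f hf (e.symm.toLinearMap ∘ₗ g)
    exact ⟨e.toLinearMap ∘ₗ h, fun x => by simp [hh x]⟩

theorem Injective.of_subsingleton [Subsingleton A] : Module.Injective R A where
  out _ _ _ _ _ _ _ _ _ := ⟨0, fun _ => Subsingleton.elim _ _⟩

instance Injective.prod [Module.Injective R A] [Module.Injective R B] :
    Module.Injective R (A × B) where
  out _ _ _ _ _ _ f hf g := by
    obtain ⟨h₁, hh₁⟩ := Module.Injective.out f hf (LinearMap.fst R A B ∘ₗ g)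
    obtain ⟨h₂, hh₂⟩ := Module.Injective.out f hf (LinearMap.snd R A B ∘ₗ g)
    exact ⟨h₁.prod h₂, fun x => Prod.ext (hh₁ x) (hh₂ x)⟩

theorem Injective.exists_isCompl (A : Submodule R B) [Module.Injective R A] :
    ∃ A' : Submodule R B, IsCompl A A' :=
  have ⟨_, hρ⟩ := Module.Injective.out A.subtype A.injective_subtype LinearMap.id
  ⟨_, LinearMap.isCompl_of_proj hρ⟩

theorem Injective.of_submodule_of_quotient (A : Submodule R B) [Module.Injective R A]
    [Module.Injective R (B ⧸ A)] : Module.Injective R B := by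
  obtain ⟨A', hA'⟩ := exists_isCompl A
  have : Module.Injective R A' := .of_linearEquiv (A.quotientEquivOfIsCompl A' hA')
  exact .of_linearEquiv (A.prodEquivOfIsCompl A' hA')

end Injective

def IsCohereditary (R : Type u) [Ring R] (M : Type v) [AddCommGroup M] [Module R M] : Prop :=
  ∀ N : Submodule R M, Module.Injective R (M ⧸ N)

namespace IsCohereditary

variable {M M' Q : Type v} [AddCommGroup M] [AddCommGroup M'] [AddCommGroup Q]
  [Module R M] [Module R M'] [Module R Q]

theorem injective (h : IsCohereditary R M) : Module.Injective R M :=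
  have := h ⊥
  .of_linearEquiv (Submodule.quotEquivOfEqBot ⊥ rfl)

theorem of_surjective (h : IsCohereditary R M) (f : M →ₗ[R] M') (hf : Function.Surjective f) :
    IsCohereditary R M' := fun N =>
  have := h (LinearMap.ker (N.mkQ ∘ₗ f))
  .of_linearEquiv ((N.mkQ ∘ₗ f).quotKerEquivOfSurjective (N.mkQ_surjective.comp hf))

theorem of_subsingleton [Subsingleton M] : IsCohereditary R M := fun _ =>
  Injective.of_subsingleton

theorem prod (h : IsCohereditary R M) (h' : IsCohereditary R M') :
    IsCohereditary R (M × M') := by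
  intro K
  set A := LinearMap.range (K.mkQ ∘ₗ LinearMap.inl R M M')
  have : Module.Injective R A :=
    (h.of_surjective _ (K.mkQ ∘ₗ LinearMap.inl R M M').surjective_rangeRestrict).injective
  have : Module.Injective R (((M × M') ⧸ K) ⧸ A) := by
    refine (h'.of_surjective (A.mkQ ∘ₗ K.mkQ ∘ₗ LinearMap.inr R M M') ?_).injective
    intro q
    obtain ⟨p, rfl⟩ := A.mkQ_surjective q
    obtain ⟨⟨x, x'⟩, rfl⟩ := K.mkQ_surjective p
    refine ⟨x', (Submodule.Quotient.eq A).2 ⟨-x, ?_⟩⟩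
    simp [← Submodule.Quotient.mk_sub]
  exact .of_submodule_of_quotient A

theorem sup {A B : Submodule R Q} (hA : IsCohereditary R A) (hB : IsCohereditary R B) :
    IsCohereditary R ↥(A ⊔ B) := by
  refine (hA.prod hB).of_surjective
    ((Submodule.inclusion le_sup_left).coprod (Submodule.inclusion le_sup_right)) ?_
  rintro ⟨x, hx⟩
  obtain ⟨a, ha, b, hb, rfl⟩ := Submodule.mem_sup.1 hx
  exact ⟨(⟨a, ha⟩, ⟨b, hb⟩), rfl⟩

theorem finset_sup {ι : Type*} {S : ι → Submodule R Q} (hS : ∀ i, IsCohereditary R (S i))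
    (s : Finset ι) : IsCohereditary R ↥(s.sup S) :=
  Finset.sup_induction (p := fun T : Submodule R Q => IsCohereditary R T) of_subsingleton
    (fun _ h₁ _ h₂ => h₁.sup h₂) (fun i _ => hS i)

theorem isDualRickart (h : IsCohereditary R M) : IsDualRickart R M := fun φ =>
  have := h (LinearMap.ker φ)
  have : Module.Injective R (LinearMap.range φ) := .of_linearEquiv φ.quotKerEquivRange
  Injective.exists_isCompl _

end IsCohereditary

section Noetherian

variable [IsNoetherianRing R] {Q : Type v} [AddCommGroup Q] [Module R Q]

theorem _root_.LinearPMap.exists_le_mem_domain_of_forall_fg_le_injective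
    (hQ : ∀ G : Submodule R Q, G.FG → ∃ S : Submodule R Q, G ≤ S ∧ Module.Injective R S)
    {Y : Type v} [AddCommGroup Y] [Module R Y] (p : Y →ₗ.[R] Q) (y : Y) :
    ∃ p' : Y →ₗ.[R] Q, p ≤ p' ∧ y ∈ p'.domain := by
  set W := p.domain ⊓ R ∙ y
  have hW : W.FG := (Submodule.fg_span_singleton y).of_le inf_le_right
  set h₀ : W →ₗ[R] Q := p.toFun ∘ₗ Submodule.inclusion inf_le_left
  obtain ⟨S, hS, _⟩ := hQ (LinearMap.range h₀) (by
    rw [LinearMap.range_eq_map]; exact ((Submodule.fg_top W).2 hW).map h₀)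
  obtain ⟨k, hk⟩ := Module.Injective.out (Submodule.inclusion (inf_le_right : W ≤ R ∙ y))
    (Submodule.inclusion_injective _) (h₀.codRestrict S fun w => hS ⟨w, rfl⟩)
  set q : Y →ₗ.[R] Q := ⟨R ∙ y, S.subtype ∘ₗ k⟩
  have hpq : ∀ (a : p.domain) (b : q.domain), (a : Y) = b → p a = q b := by
    rintro a ⟨b, hb⟩ rfl
    exact congrArg Subtype.val (hk ⟨a, a.2, hb⟩).symm
  exact ⟨p.sup q hpq, p.left_le_sup q hpq,
    (le_sup_right : q.domain ≤ _) (Submodule.mem_span_singleton_self y)⟩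

-- Going through `Module.Baer` would need `Small.{v} R` to get the Baer property of the
-- injective submodules `S`; extending partial maps on the test module itself avoids this.
theorem injective_of_forall_fg_le_injective
    (hQ : ∀ G : Submodule R Q, G.FG → ∃ S : Submodule R Q, G ≤ S ∧ Module.Injective R S) :
    Module.Injective R Q where
  out _ _ _ _ _ _ i hi f := by
    have : Fact (Function.Injective i) := ⟨hi⟩
    set E := Baer.extensionOfMax i f
    have hdom : ∀ y, y ∈ E.domain := fun y => by
      obtain ⟨p, hEp, hy⟩ := E.exists_le_mem_domain_of_forall_fg_le_injective hQ y
      let E' : Baer.ExtensionOf i f :=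
        { toLinearPMap := p
          le := E.le.trans hEp.1
          is_extension := fun x => (E.is_extension x).trans (hEp.2 rfl) }
      have hE : E' = E := Baer.extensionOfMax_is_max i f E' hEp
      rw [← hE]
      exact hy
    exact ⟨E.toFun ∘ₗ LinearMap.codRestrict E.domain LinearMap.id hdom,
      fun x => (E.is_extension x).symm⟩

theorem IsCohereditary.injective_of_iSup_eq_top {ι : Type*} {S : ι → Submodule R Q}
    (hS : ∀ i, IsCohereditary R (S i)) (htop : ⨆ i, S i = ⊤) : Module.Injective R Q :=
  injective_of_forall_fg_le_injective fun G hG => by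
    obtain ⟨s, hs⟩ := CompleteLattice.IsCompactElement.exists_finset_of_le_iSup _
      ((Submodule.fg_iff_compact G).1 hG) S (htop ▸ le_top)
    exact ⟨s.sup S, s.sup_eq_iSup S ▸ hs, (IsCohereditary.finset_sup hS s).injective⟩

theorem IsCohereditary.finsupp {M : Type v} [AddCommGroup M] [Module R M]
    (h : IsCohereditary R M) (Λ : Type v) : IsCohereditary R (Λ →₀ M) := fun N =>
  injective_of_iSup_eq_top (S := fun a => LinearMap.range (N.mkQ ∘ₗ Finsupp.lsingle a))
    (fun _ => h.of_surjective _ (LinearMap.surjective_rangeRestrict _)) <| by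
      simp_rw [LinearMap.range_comp, ← Submodule.map_iSup, Finsupp.iSup_lsingle_range,
        Submodule.map_top, Submodule.range_mkQ]

end Noetherian

end Module

/-- Every cohereditary module over a Noetherian ring is Σ-dual Rickart. -/
theorem stmt4 (R : Type u) [Ring R] [IsNoetherianRing R]
    (M : Type v) [AddCommGroup M] [Module R M]
    (hcoher : ∀ N : Submodule R M, Module.Injective R (M ⧸ N)) :
    IsSigmaDualRickart R M :=
  fun Λ => (Module.IsCohereditary.finsupp hcoher Λ).isDualRickart
end

section
/- An R-module M is Σ-dual Rickart if and only if every module in Add(M) is a Σ-dual Rickart module, where Add(M) is the class of modules isomorphic to a direct summand of a direct sum M^(Λ) of copies of M for some index set Λ. -/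
universe u v

/-- `U ∈ Add(M)`: `U` is isomorphic to a direct summand of a direct sum of copies of `M`. -/
def InAdd (R : Type u) [Ring R] (M : Type v) [AddCommGroup M] [Module R M]
    (U : Type v) [AddCommGroup U] [Module R U] : Prop :=
  ∃ (Λ : Type v) (K K' : Submodule R (Λ →₀ M)), IsCompl K K' ∧ Nonempty (U ≃ₗ[R] K)

/-!
Dual-Rickart modules are closed under retracts: if `p ∘ i = id` and `i S` is a direct summand
with projection `π`, then `p ∘ π ∘ i` is an idempotent with image `S`; apply this to `S = range φ`,
for which `i S` is the image of `i ∘ φ ∘ p`. A module `U` in `Add(M)` is a retract of some `M^(Λ)`,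
so every `U^(Λ')` is a retract of `M^(Λ' × Λ)`; conversely `M` itself lies in `Add(M)`.
-/

section Retract

variable {R : Type*} [Ring R] {N U : Type*} [AddCommGroup N] [Module R N]
  [AddCommGroup U] [Module R U] {i : U →ₗ[R] N} {p : N →ₗ[R] U}

theorem Submodule.exists_isCompl_of_isCompl_map (hpi : Function.LeftInverse p i)
    {S : Submodule R U} {T : Submodule R N} (h : IsCompl (S.map i) T) :
    ∃ S' : Submodule R U, IsCompl S S' := by
  have hmem : ∀ u, p ((S.map i).projection T h (i u)) ∈ S := fun u => by
    obtain ⟨s, hs, hs'⟩ := Submodule.mem_map.mp ((S.map i).projection_apply_mem h (i u))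
    rwa [← hs', hpi]
  let f : U →ₗ[R] S := (p ∘ₗ (S.map i).projection T h ∘ₗ i).codRestrict S hmem
  refine ⟨LinearMap.ker f, LinearMap.isCompl_of_proj fun s => Subtype.ext ?_⟩
  change p ((S.map i).projection T h (i s)) = s
  rw [Submodule.projection_apply_of_mem_left h (Submodule.mem_map_of_mem s.2), hpi]

theorem IsDualRickart.of_leftInverse (hpi : Function.LeftInverse p i) (hN : IsDualRickart R N) :
    IsDualRickart R U := by
  intro φ
  obtain ⟨T, hT⟩ := hN (i ∘ₗ φ ∘ₗ p)
  rw [LinearMap.range_comp, LinearMap.range_comp, LinearMap.range_eq_top.mpr hpi.surjective,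
    Submodule.map_top] at hT
  exact Submodule.exists_isCompl_of_isCompl_map hpi hT

end Retract

variable {R : Type u} [Ring R] {M U : Type v} [AddCommGroup M] [Module R M]
  [AddCommGroup U] [Module R U]

theorem IsSigmaDualRickart.of_leftInverse {Λ : Type v} {i : U →ₗ[R] Λ →₀ M}
    {p : (Λ →₀ M) →ₗ[R] U} (hpi : Function.LeftInverse p i) (hM : IsSigmaDualRickart R M) :
    IsSigmaDualRickart R U := by
  intro Λ'
  let e := Finsupp.curryLinearEquiv (α := Λ') (β := Λ) (M := M) R
  refine IsDualRickart.of_leftInverse (i := e.symm ∘ₗ Finsupp.mapRange.linearMap i)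
    (p := Finsupp.mapRange.linearMap p ∘ₗ e) (fun f => ?_) (hM (Λ' × Λ))
  ext a
  simp [hpi (f a)]

theorem InAdd.exists_leftInverse (hU : InAdd R M U) :
    ∃ (Λ : Type v) (i : U →ₗ[R] Λ →₀ M) (p : (Λ →₀ M) →ₗ[R] U), Function.LeftInverse p i := by
  obtain ⟨Λ, K, K', hKK', ⟨e⟩⟩ := hU
  exact ⟨Λ, K.subtype ∘ₗ e, e.symm ∘ₗ K.projectionOnto K' hKK', fun u => by simp⟩

variable (R M) in
theorem inAdd_self : InAdd R M M :=
  ⟨PUnit, ⊤, ⊥, isCompl_top_bot,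
    ⟨(Finsupp.uniqueLinearEquiv R M PUnit.unit).symm ≪≫ₗ (Submodule.topEquiv).symm⟩⟩

/-- `M` is Σ-dual Rickart iff every module in `Add(M)` is Σ-dual Rickart. -/
theorem stmt8 (R : Type u) [Ring R] (M : Type v) [AddCommGroup M] [Module R M] :
    IsSigmaDualRickart R M ↔
      ∀ (U : Type v) [AddCommGroup U] [Module R U], InAdd R M U → IsSigmaDualRickart R U := by
  refine ⟨fun hM U _ _ hU => ?_, fun h => h M (inAdd_self R M)⟩
  obtain ⟨Λ, i, p, hpi⟩ := hU.exists_leftInverse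
  exact hM.of_leftInverse hpi
end

section
/- Let R be a Noetherian ring and M a quasi-injective R-module (every homomorphism from a submodule of M into M extends to an endomorphism of M). If M is a Σ-Rickart module, then M is a Σ-dual Rickart module. -/
universe u v

/-- A module `M` is Rickart if the kernel of every endomorphism is a direct summand. -/
def IsRickart (R : Type u) [Ring R] (M : Type v) [AddCommGroup M] [Module R M] : Prop :=
  ∀ φ : M →ₗ[R] M, ∃ q : Submodule R M, IsCompl (LinearMap.ker φ) q

/-- A module `M` is Σ-Rickart if every direct sum of copies of `M` is Rickart. -/
def IsSigmaRickart (R : Type u) [Ring R] (M : Type v) [AddCommGroup M] [Module R M] : Prop :=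
  ∀ Λ : Type v, IsRickart R (Λ →₀ M)

/-- `M` is quasi-injective: every homomorphism from a submodule of `M` to `M` extends to
an endomorphism of `M`. -/
def IsQuasiInjective (R : Type u) [Ring R] (M : Type v) [AddCommGroup M] [Module R M] :
    Prop :=
  ∀ (N : Submodule R M) (f : N →ₗ[R] M), ∃ g : M →ₗ[R] M, ∀ x : N, g x = f x

/-!
A quasi-injective module `M` is fully invariant in its injective hull `E` (a maximal essential
extension of `M` inside some injective module, obtained by Zorn's lemma): for an
endomorphism `h` of `E`, extend `h` from `{m ∈ M | h m ∈ M}` to an endomorphism `g` of `M`; then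
`h - g` sends no nonzero element of `M` into `M`, so by essentiality it vanishes on `M`.
Over a Noetherian ring `E^(Λ)` is again injective (maps from f.g. ideals land in finitely many
coordinates), and `M^(Λ)` is fully invariant in it, hence quasi-injective.
A quasi-injective Rickart module is dual-Rickart: if `M = ker φ ⊕ Q`, then `φ` maps `Q`
isomorphically onto `φ(M)`; extending the inverse `φ(M) → Q ⊆ M` to an endomorphism `g`
makes `φ ∘ g` a projection onto `φ(M)`.
-/

open LinearMap

theorem exists_maximal_disjoint {α : Type*} [CompleteLattice α] [IsCompactlyGenerated α] (a : α) :
    ∃ b, Maximal (Disjoint a) b := by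
  obtain ⟨b, -, hb⟩ := zorn_le_nonempty₀ {b | Disjoint a b}
    (fun c hc hchain _ _ => ⟨sSup c, hchain.directedOn.disjoint_sSup_right.mpr hc,
      fun _ => le_sSup⟩) ⊥ disjoint_bot_right
  exact ⟨b, hb⟩

section DualRickart

variable {R M : Type*} [Ring R] [AddCommGroup M] [Module R M]

theorem LinearMap.exists_rangeRestrict_comp_eq_id {N : Type*} [AddCommGroup N] [Module R N]
    (φ : M →ₗ[R] N) {Q : Submodule R M} (hQ : IsCompl (ker φ) Q) :
    ∃ σ : range φ →ₗ[R] M, φ.rangeRestrict ∘ₗ σ = LinearMap.id := by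
  refine ⟨Q.subtype ∘ₗ (Submodule.quotientEquivOfIsCompl _ _ hQ).toLinearMap ∘ₗ
    φ.quotKerEquivRange.symm.toLinearMap, ?_⟩
  refine LinearMap.ext fun y => ?_
  obtain ⟨x, rfl⟩ := φ.surjective_rangeRestrict y
  have hx : φ.quotKerEquivRange.symm (φ.rangeRestrict x) = Submodule.Quotient.mk x :=
    φ.quotKerEquivRange.symm_apply_eq.mpr (Subtype.ext rfl)
  simp only [comp_apply, LinearEquiv.coe_coe, id_apply, hx,
    Submodule.quotientEquivOfIsCompl_apply_mk]
  rw [Submodule.subtype_apply, Submodule.coe_projectionOnto_apply, eq_comm, ← sub_eq_zero,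
    ← map_sub, ← LinearMap.mem_ker, ker_rangeRestrict]
  exact Submodule.sub_projection_mem _ x

theorem IsQuasiInjective.isDualRickart (hqi : IsQuasiInjective R M) (hr : IsRickart R M) :
    IsDualRickart R M := by
  intro φ
  obtain ⟨Q, hQ⟩ := hr φ
  obtain ⟨σ, hσ⟩ := φ.exists_rangeRestrict_comp_eq_id hQ
  obtain ⟨g, hg⟩ := hqi _ σ
  exact ⟨_, isCompl_of_proj (f := φ.rangeRestrict ∘ₗ g) fun y => by
    rw [comp_apply, hg, ← comp_apply, hσ, id_apply]⟩

end DualRickart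

section Essential

variable {R E : Type*} [Ring R] [AddCommGroup E] [Module R E]

def Submodule.IsEssentialIn (N P : Submodule R E) : Prop :=
  ∀ x ∈ P, x ≠ 0 → ∃ r : R, r • x ∈ N ∧ r • x ≠ 0

theorem Submodule.exists_maximal_isEssentialIn (N : Submodule R E) :
    ∃ P, Maximal (fun P => N ≤ P ∧ N.IsEssentialIn P) P := by
  obtain ⟨P, -, hP⟩ := zorn_le_nonempty₀ {P | N ≤ P ∧ N.IsEssentialIn P}
    (fun c hc hchain P₀ hP₀ => by
      refine ⟨sSup c, ⟨(hc hP₀).1.trans (le_sSup hP₀), fun x hx hx0 => ?_⟩, fun _ => le_sSup⟩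
      obtain ⟨P, hPc, hxP⟩ := (Submodule.mem_sSup_of_directed ⟨P₀, hP₀⟩ hchain.directedOn).mp hx
      exact (hc hPc).2 x hxP hx0)
    N ⟨le_rfl, fun x hx hx0 => ⟨1, by simpa using hx, by simpa using hx0⟩⟩
  exact ⟨P, hP⟩

theorem Submodule.isEssentialIn_map_mkQ {P C : Submodule R E} (hC : Maximal (Disjoint P) C) :
    (P.map C.mkQ).IsEssentialIn ⊤ := by
  intro z _ hz
  obtain ⟨x, rfl⟩ := C.mkQ_surjective z
  have hxC : x ∉ C := by rwa [mkQ_apply, ne_eq, Submodule.Quotient.mk_eq_zero] at hz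
  have hmeet : ¬ Disjoint P (C ⊔ R ∙ x) := fun hd =>
    hxC (hC.2 hd le_sup_left (Submodule.mem_sup_right (Submodule.mem_span_singleton_self x)))
  obtain ⟨e, heP, he, he0⟩ : ∃ e ∈ P, e ∈ C ⊔ R ∙ x ∧ e ≠ 0 := by
    simpa [Submodule.disjoint_def] using hmeet
  obtain ⟨c, hc, _, hrx, rfl⟩ := Submodule.mem_sup.mp he
  obtain ⟨r, rfl⟩ := Submodule.mem_span_singleton.mp hrx
  have hmk : C.mkQ (c + r • x) = r • C.mkQ x := by
    rw [map_add, map_smul, mkQ_apply C, (Submodule.Quotient.mk_eq_zero C).mpr hc, zero_add]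
  refine ⟨r, ⟨c + r • x, heP, hmk⟩, fun hr0 => he0 ?_⟩
  have hrxC : r • x ∈ C := by rwa [← map_smul, mkQ_apply, Submodule.Quotient.mk_eq_zero] at hr0
  exact Submodule.disjoint_def.mp hC.1 _ heP (C.add_mem hc hrxC)

end Essential

section Baer

variable {R E P Q : Type*} [Ring R] [AddCommGroup E] [Module R E] [AddCommGroup P] [Module R P]
  [AddCommGroup Q] [Module R Q]

theorem Module.Baer.of_retract (hQ : Module.Baer R Q) (i : P →ₗ[R] Q) (r : Q →ₗ[R] P)
    (hri : r ∘ₗ i = LinearMap.id) : Module.Baer R P := fun I g =>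
  let ⟨g', hg'⟩ := hQ I (i ∘ₗ g)
  ⟨r ∘ₗ g', fun x hx => by rw [comp_apply, hg' x hx]; exact LinearMap.congr_fun hri _⟩

theorem Submodule.FG.exists_le_supported {Λ : Type*} {N : Submodule R (Λ →₀ Q)} (hN : N.FG) :
    ∃ s : Finset Λ, N ≤ Finsupp.supported Q R (s : Set Λ) := by
  classical
  obtain ⟨t, rfl⟩ := hN
  refine ⟨t.biUnion Finsupp.support, Submodule.span_le.mpr fun v hv => ?_⟩
  rw [SetLike.mem_coe, Finsupp.mem_supported, Finset.coe_subset]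
  exact Finset.subset_biUnion_of_mem _ hv

theorem Module.Baer.finsupp [IsNoetherianRing R] (hQ : Module.Baer R Q) (Λ : Type*) :
    Module.Baer R (Λ →₀ Q) := by
  classical
  intro I f
  obtain ⟨s, hs⟩ := ((IsNoetherian.noetherian (⊤ : Submodule R I)).map f).exists_le_supported
  choose g hg using fun μ => hQ I (Finsupp.lapply μ ∘ₗ f)
  refine ⟨∑ μ ∈ s, Finsupp.lsingle μ ∘ₗ g μ, fun x hx => ?_⟩
  have hsupp : (f ⟨x, hx⟩).support ⊆ s :=
    Finset.coe_subset.mp ((Finsupp.mem_supported R _).mp (hs ⟨⟨x, hx⟩, trivial, rfl⟩))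
  simp only [LinearMap.sum_apply, comp_apply, hg _ x hx, Finsupp.lsingle_apply,
    Finsupp.lapply_apply]
  rw [← Finsupp.sum_of_support_subset _ hsupp _ fun _ _ => Finsupp.single_zero _,
    Finsupp.sum_single]

theorem Module.Baer.of_maximal_isEssentialIn (hE : Module.Baer R E) {N P : Submodule R E}
    (hP : Maximal (fun P => N ≤ P ∧ N.IsEssentialIn P) P) : Module.Baer R P := by
  -- For `C` maximal disjoint from `P`, the inclusion of `P` extends along `P ↪ E ⧸ C` to an
  -- injective `g`; the range of `g` is an essential extension of `N` containing `P`, hence is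
  -- `P` by maximality, and `g ∘ C.mkQ` retracts `E` onto `P`.
  obtain ⟨C, hC⟩ := exists_maximal_disjoint P
  have hθ : Function.Injective (C.mkQ ∘ₗ P.subtype) := by
    rw [← ker_eq_bot, ker_comp, Submodule.ker_mkQ, ← Submodule.disjoint_iff_comap_eq_bot]
    exact hC.1
  obtain ⟨g, hg⟩ := hE.extension_property _ hθ P.subtype
  have hgP : ∀ x ∈ P, g (C.mkQ x) = x := fun x hx => LinearMap.congr_fun hg ⟨x, hx⟩
  have hess : ∀ z, z ≠ 0 → ∃ r : R, r • g z ∈ P ∧ r • g z ≠ 0 := by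
    intro z hz
    obtain ⟨r, ⟨e, heP, he⟩, hr0⟩ := Submodule.isEssentialIn_map_mkQ hC z trivial hz
    have hrg : r • g z = e := by rw [← map_smul, ← he, hgP e heP]
    refine ⟨r, hrg ▸ heP, fun h0 => hr0 ?_⟩
    rw [← he, ← hrg, h0, map_zero]
  have hrange : LinearMap.range g ≤ P := by
    have hPg : P ≤ LinearMap.range g := fun x hx => ⟨C.mkQ x, hgP x hx⟩
    refine hP.2 ⟨hP.1.1.trans hPg, ?_⟩ hPg
    rintro _ ⟨z, rfl⟩ hgz
    obtain ⟨r, hrP, hr0⟩ := hess z fun hz => hgz (by rw [hz, map_zero])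
    obtain ⟨s, hsN, hs0⟩ := hP.1.2 _ hrP hr0
    exact ⟨s * r, by rwa [mul_smul], by rwa [mul_smul]⟩
  refine hE.of_retract P.subtype ((g ∘ₗ C.mkQ).codRestrict P fun x => hrange ⟨_, rfl⟩) ?_
  ext x
  exact hgP x x.2

end Baer

section InjectiveHull

variable (R : Type u) [Ring R] (M : Type v) [AddCommGroup M] [Module R M]

-- Baer modules rather than `Module.Injective` ones, since `Module.Baer.extension_property`
-- places no universe restriction on the modules involved.
theorem Module.exists_baer_extension :
    ∃ (E : Type (max u v)) (_ : AddCommGroup E) (_ : Module R E)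
      (ι : M →ₗ[R] E), Function.Injective ι ∧ Module.Baer R E := by
  have := ModuleCat.enoughInjectives.{v} R
  let X := ModuleCat.of R (ULift.{u} M)
  let E : ModuleCat.{max u v} R := CategoryTheory.Injective.under X
  have : CategoryTheory.Injective (ModuleCat.of R E) := CategoryTheory.Injective.injective_under X
  refine ⟨E, _, _, (CategoryTheory.Injective.ι X).hom ∘ₗ ULift.moduleEquiv.symm.toLinearMap, ?_,
    .of_injective (Module.injective_module_of_injective_object R E)⟩
  exact ((ModuleCat.mono_iff_injective _).mp inferInstance).comp ULift.moduleEquiv.symm.injective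

theorem Module.exists_baer_essential_extension :
    ∃ (E : Type (max u v)) (_ : AddCommGroup E) (_ : Module R E)
      (j : M →ₗ[R] E), Function.Injective j ∧ (range j).IsEssentialIn ⊤ ∧ Module.Baer R E := by
  obtain ⟨E₀, _, _, ι, hι, hE₀⟩ := Module.exists_baer_extension R M
  obtain ⟨P, hP⟩ := (range ι).exists_maximal_isEssentialIn
  refine ⟨P, _, _, ι.codRestrict P fun m => hP.1.1 ⟨m, rfl⟩,
    fun a b hab => hι congr(($hab : E₀)), ?_, hE₀.of_maximal_isEssentialIn hP⟩
  rintro x - hx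
  obtain ⟨r, ⟨m, hm⟩, hr0⟩ := hP.1.2 x x.2 (Submodule.coe_eq_zero.not.mpr hx)
  exact ⟨r, ⟨m, Subtype.ext hm⟩, fun h => hr0 congr(($h : E₀))⟩

end InjectiveHull

section QuasiInjective

variable {R M X : Type*} [Ring R] [AddCommGroup M] [Module R M] [AddCommGroup X] [Module R X]

theorem IsQuasiInjective.isFullyInvariant_range (hqi : IsQuasiInjective R M) (j : M →ₗ[R] X)
    (hj : Function.Injective j) (hess : (range j).IsEssentialIn ⊤) :
    (range j).IsFullyInvariant := by
  intro h
  let D := ((range j).comap h).comap j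
  obtain ⟨g, hg⟩ := hqi D ((LinearEquiv.ofInjective j hj).symm ∘ₗ
    (h ∘ₗ j ∘ₗ D.subtype).codRestrict (range j) fun d => d.2)
  have hgD : ∀ d : D, j (g d) = h (j d) := fun d => by
    rw [hg, comp_apply, LinearEquiv.coe_coe, LinearEquiv.ofInjective_symm_apply]
    rfl
  suffices hδ : ∀ m, h (j m) - j (g m) = 0 by
    rintro _ ⟨m, rfl⟩
    exact ⟨g m, (sub_eq_zero.mp (hδ m)).symm⟩
  by_contra! ⟨m, hm⟩
  obtain ⟨r, ⟨m', hm'⟩, hr0⟩ := hess _ trivial hm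
  have hδr : r • (h (j m) - j (g m)) = h (j (r • m)) - j (g (r • m)) := by
    simp only [map_smul, smul_sub]
  have hrD : r • m ∈ D := by
    show h (j (r • m)) ∈ range j
    rw [← sub_add_cancel (h (j (r • m))) (j (g (r • m))), ← hδr, ← hm']
    exact add_mem ⟨m', rfl⟩ ⟨g (r • m), rfl⟩
  exact hr0 (by rw [hδr, ← hgD ⟨r • m, hrD⟩, sub_self])

theorem IsQuasiInjective.of_isFullyInvariant_range (hX : Module.Baer R X) (j : M →ₗ[R] X)
    (hj : Function.Injective j) (hinv : (range j).IsFullyInvariant) : IsQuasiInjective R M := by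
  intro K f
  obtain ⟨h, hh⟩ := hX.extension_property (j ∘ₗ K.subtype) (hj.comp Subtype.val_injective)
    (j ∘ₗ f)
  refine ⟨(LinearEquiv.ofInjective j hj).symm ∘ₗ
    (h ∘ₗ j).codRestrict (range j) (fun m => hinv h ⟨m, rfl⟩), fun x => hj ?_⟩
  rw [comp_apply, LinearEquiv.coe_coe, LinearEquiv.ofInjective_symm_apply]
  exact LinearMap.congr_fun hh x

theorem Submodule.IsFullyInvariant.finsupp {N : Submodule R X} (hN : N.IsFullyInvariant)
    (Λ : Type*) : (Finsupp.submodule fun _ : Λ => N).IsFullyInvariant := by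
  intro h
  refine (Finsupp.submodule_eq_iSup _).le.trans (iSup_le fun i => ?_)
  rintro _ ⟨n, hn, rfl⟩ μ
  exact hN (Finsupp.lapply μ ∘ₗ h ∘ₗ Finsupp.lsingle i) hn

theorem IsQuasiInjective.finsupp [IsNoetherianRing R] (hqi : IsQuasiInjective R M) (Λ : Type*) :
    IsQuasiInjective R (Λ →₀ M) := by
  obtain ⟨E, _, _, j, hj, hess, hE⟩ := Module.exists_baer_essential_extension R M
  refine .of_isFullyInvariant_range (hE.finsupp Λ) (Finsupp.mapRange.linearMap j)
    (Finsupp.mapRange_injective _ (map_zero j) hj) ?_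
  rw [Finsupp.range_mapRange_linearMap j (ker_eq_bot.mpr hj)]
  exact (hqi.isFullyInvariant_range j hj hess).finsupp Λ

end QuasiInjective

/-- Over a Noetherian ring, a quasi-injective Σ-Rickart module is Σ-dual Rickart. -/
theorem stmt11 (R : Type u) [Ring R] [IsNoetherianRing R]
    (M : Type v) [AddCommGroup M] [Module R M]
    (hqi : IsQuasiInjective R M) (hM : IsSigmaRickart R M) :
    IsSigmaDualRickart R M :=
  fun Λ => (hqi.finsupp Λ).isDualRickart (hM Λ)
end

section
/- Let M be an R-module that is Σ-quasi-injective, i.e., for every index set Λ the direct sum M^(Λ) is quasi-injective. If M is a Σ-Rickart module, then M is a Σ-dual Rickart module. -/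
universe u v

/-!
If `ker φ` has a complement `K`, then `φ` maps `K` isomorphically onto `range φ`; quasi-injectivity
extends the inverse `range φ → K ⊆ M` to an endomorphism `g` with `φ ∘ g ∘ φ = φ`. Then `φ ∘ g` is
an idempotent with the same range as `φ`, so `range φ` is a direct summand. Applied to the direct
sums `M^(Λ)`, which are Rickart and quasi-injective, this gives the theorem.
-/

namespace LinearMap

variable {R : Type*} [Ring R] {M N : Type*} [AddCommGroup M] [Module R M]
  [AddCommGroup N] [Module R N]

theorem exists_rightInverse_on_range_of_isCompl_ker {f : M →ₗ[R] N} {K : Submodule R M}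
    (hK : IsCompl (ker f) K) : ∃ s : range f →ₗ[R] M, ∀ y : range f, f (s y) = y := by
  refine ⟨K.subtype ∘ₗ (Submodule.quotientEquivOfIsCompl _ K hK).toLinearMap ∘ₗ
    f.quotKerEquivRange.symm.toLinearMap, fun y => ?_⟩
  set x := f.quotKerEquivRange.symm y
  calc f (K.subtype (Submodule.quotientEquivOfIsCompl _ K hK x))
      = f.quotKerEquivRange (Submodule.Quotient.mk
          (K.subtype (Submodule.quotientEquivOfIsCompl _ K hK x))) :=
        (f.quotKerEquivRange_apply_mk _).symm
    _ = y := by simp [x]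

theorem isCompl_range_of_comp_comp_eq_self {φ g : M →ₗ[R] M} (h : φ ∘ₗ g ∘ₗ φ = φ) :
    ∃ q : Submodule R M, IsCompl (range φ) q := by
  have hidem : IsIdempotentElem (φ ∘ₗ g) := by
    change (φ ∘ₗ g) ∘ₗ (φ ∘ₗ g) = φ ∘ₗ g
    rw [← comp_assoc, comp_assoc φ, h]
  have hrange : range (φ ∘ₗ g) = range φ :=
    le_antisymm (range_comp_le_range g φ) <| by
      conv_lhs => rw [← h]
      exact range_comp_le_range φ (φ ∘ₗ g)
  exact ⟨_, hrange ▸ IsIdempotentElem.isCompl hidem⟩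

end LinearMap

open LinearMap in
theorem IsQuasiInjective.exists_comp_comp_eq_self_of_isCompl_ker {R : Type u} [Ring R]
    {M : Type v} [AddCommGroup M] [Module R M] (hqi : IsQuasiInjective R M) {φ : M →ₗ[R] M}
    {K : Submodule R M} (hK : IsCompl (ker φ) K) : ∃ g : M →ₗ[R] M, φ ∘ₗ g ∘ₗ φ = φ := by
  obtain ⟨s, hs⟩ := exists_rightInverse_on_range_of_isCompl_ker hK
  obtain ⟨g, hg⟩ := hqi (range φ) s
  refine ⟨g, LinearMap.ext fun x => ?_⟩
  rw [comp_apply, comp_apply, hg ⟨φ x, x, rfl⟩, hs]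

theorem IsQuasiInjective.isDualRickart_of_isRickart {R : Type u} [Ring R] {M : Type v}
    [AddCommGroup M] [Module R M] (hqi : IsQuasiInjective R M) (hM : IsRickart R M) :
    IsDualRickart R M := fun φ =>
  have ⟨_, hK⟩ := hM φ
  have ⟨_, hg⟩ := hqi.exists_comp_comp_eq_self_of_isCompl_ker hK
  LinearMap.isCompl_range_of_comp_comp_eq_self hg

/-- A Σ-quasi-injective, Σ-Rickart module is Σ-dual Rickart. -/
theorem stmt12 (R : Type u) [Ring R] (M : Type v) [AddCommGroup M] [Module R M]
    (hqi : ∀ Λ : Type v, IsQuasiInjective R (Λ →₀ M)) (hM : IsSigmaRickart R M) :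
    IsSigmaDualRickart R M := fun Λ =>
  (hqi Λ).isDualRickart_of_isRickart (hM Λ)
end

section
/- Every projective Σ-dual Rickart module is a Σ-Rickart module. Precisely: if M is a projective R-module that is Σ-dual Rickart, then M is Σ-Rickart. -/
/-!
A projective module `P` that is dual-Rickart is Rickart: the image of an endomorphism `φ` is a
direct summand of `P`, hence projective, so the corestriction `P → φ(P)` splits and its kernel
`ker φ` is a direct summand. Direct sums of copies of a projective module are projective, so this
passes to `M^(Λ)`.
-/

universe u v

instance Module.Projective.finsupp {R M ι : Type*} [Semiring R] [AddCommMonoid M] [Module R M]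
    [Module.Projective R M] : Module.Projective R (ι →₀ M) := by
  classical
  exact .of_equiv' (finsuppLequivDFinsupp R).symm

theorem Module.Projective.of_isCompl {R M : Type*} [Ring R] [AddCommGroup M] [Module R M]
    [Module.Projective R M] {p q : Submodule R M} (h : IsCompl p q) : Module.Projective R p :=
  .of_split p.subtype (p.projectionOnto q h) (p.projectionOnto_comp_subtype h)

namespace LinearMap

variable {R M N : Type*} [Ring R] [AddCommGroup M] [Module R M] [AddCommGroup N] [Module R N]

theorem isCompl_ker_range_of_comp_eq_id {f : M →ₗ[R] N} {g : N →ₗ[R] M}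
    (h : f ∘ₗ g = id) : IsCompl (ker f) (range g) := by
  have hfg (y : N) : f (g y) = y := congr($h y)
  constructor
  · rw [Submodule.disjoint_def]
    rintro _ hx ⟨y, rfl⟩
    rw [mem_ker, hfg] at hx
    rw [hx, map_zero]
  · rw [codisjoint_iff_le_sup]
    intro x _
    exact Submodule.mem_sup.2
      ⟨x - g (f x), by simp [hfg], g (f x), mem_range_self g _, sub_add_cancel _ _⟩

theorem exists_isCompl_ker_of_projective_range (f : M →ₗ[R] N)
    [Module.Projective R (range f)] : ∃ q : Submodule R M, IsCompl (ker f) q := by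
  obtain ⟨g, hg⟩ := f.rangeRestrict.exists_rightInverse_of_surjective f.range_rangeRestrict
  exact ⟨range g, f.ker_rangeRestrict ▸ isCompl_ker_range_of_comp_eq_id hg⟩

end LinearMap

theorem IsDualRickart.isRickart {R : Type u} [Ring R] {M : Type v} [AddCommGroup M] [Module R M]
    [Module.Projective R M] (hM : IsDualRickart R M) : IsRickart R M := fun φ ↦ by
  obtain ⟨q, hq⟩ := hM φ
  have := Module.Projective.of_isCompl hq
  exact φ.exists_isCompl_ker_of_projective_range

/-- Every projective Σ-dual Rickart module is Σ-Rickart. -/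
theorem stmt14 (R : Type u) [Ring R] (M : Type v) [AddCommGroup M] [Module R M]
    [Module.Projective R M] (hM : IsSigmaDualRickart R M) :
    IsSigmaRickart R M :=
  fun Λ ↦ (hM Λ).isRickart
end

section
/- Let M be an R-module that is Σ-D3, i.e., for every index set Λ the direct sum M^(Λ) satisfies the D3-condition. If M is a Σ-dual Rickart module, then M is a Σ-Rickart module. -/
universe u v

/-- `M` satisfies the D3-condition: if `N₁, N₂` are direct summands of `M` with
`N₁ + N₂ = M`, then `N₁ ∩ N₂` is a direct summand of `M`. -/
def D3Cond (R : Type u) [Ring R] (M : Type v) [AddCommGroup M] [Module R M] : Prop :=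
  ∀ N₁ N₂ : Submodule R M, (∃ c, IsCompl N₁ c) → (∃ c, IsCompl N₂ c) →
    N₁ ⊔ N₂ = ⊤ → ∃ c, IsCompl (N₁ ⊓ N₂) c

/-!
Let `φ` be an endomorphism of `A = M^(Λ)` and `c` a complement of its image. In
`A × A ≅ M^(Λ ⊕ Λ)` the summand `A × 0` and the image `{(x, y) | y - φ x ∈ c}` of the summand
`A × c` under the shear `(x, y) ↦ (x, y + φ x)` together span `A × A` and meet in `ker φ × 0`.
By D3 the latter is a summand of `A × A`, hence `ker φ` is a summand of `A`.
-/

variable {R : Type*} [Ring R]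

lemma D3Cond.of_linearEquiv {P Q : Type*} [AddCommGroup P] [Module R P] [AddCommGroup Q]
    [Module R Q] (e : P ≃ₗ[R] Q) (h : D3Cond R P) : D3Cond R Q := by
  intro N₁ N₂ ⟨c₁, hc₁⟩ ⟨c₂, hc₂⟩ hsup
  let f := Submodule.orderIsoMapComap e.symm
  obtain ⟨c, hc⟩ := h (f N₁) (f N₂) ⟨f c₁, f.isCompl hc₁⟩ ⟨f c₂, f.isCompl hc₂⟩
    (by rw [← map_sup, hsup, f.map_top])
  refine ⟨f.symm c, ?_⟩
  simpa only [map_inf, f.symm_apply_apply] using f.symm.isCompl hc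

namespace Submodule

variable {M N : Type*} [AddCommGroup M] [Module R M] [AddCommGroup N] [Module R N]

lemma isCompl_prod {p p' : Submodule R M} {q q' : Submodule R N} (hp : IsCompl p p')
    (hq : IsCompl q q') : IsCompl (p.prod q) (p'.prod q') := by
  constructor
  · rw [disjoint_iff, prod_inf_prod, hp.inf_eq_bot, hq.inf_eq_bot, prod_bot]
  · rw [codisjoint_iff, prod_sup_prod, hp.sup_eq_top, hq.sup_eq_top, prod_top]

lemma isCompl_comap_of_isCompl_map_s15 {f : M →ₗ[R] N} (hf : Function.Injective f)
    {p : Submodule R M} {q : Submodule R N} (h : IsCompl (p.map f) q) :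
    IsCompl p (q.comap f) := by
  constructor
  · rw [disjoint_iff, eq_bot_iff]
    intro x ⟨hxp, hxq⟩
    have : f x ∈ p.map f ⊓ q := ⟨mem_map_of_mem hxp, hxq⟩
    rw [h.inf_eq_bot, mem_bot, map_eq_zero_iff f hf] at this
    exact (mem_bot R).mpr this
  · rw [codisjoint_iff, eq_top_iff]
    intro x _
    obtain ⟨_, ⟨y, hy, rfl⟩, z, hz, hyz⟩ :=
      mem_sup.mp (h.sup_eq_top ▸ mem_top : f x ∈ p.map f ⊔ q)
    refine mem_sup.mpr ⟨y, hy, x - y, ?_, add_sub_cancel y x⟩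
    rwa [mem_comap, map_sub, ← hyz, add_sub_cancel_left]

end Submodule

section Shear

open LinearMap Submodule

variable {A : Type*} [AddCommGroup A] [Module R A] (φ : A →ₗ[R] A) (c : Submodule R A)

/-- The image of `A × c` under the shear automorphism `(x, y) ↦ (x, y + φ x)`. -/
def shearSummand : Submodule R (A × A) :=
  c.comap (LinearMap.snd R A A - φ ∘ₗ LinearMap.fst R A A)

lemma mem_shearSummand {p : A × A} : p ∈ shearSummand φ c ↔ p.2 - φ p.1 ∈ c := Iff.rfl

variable {φ c}

lemma exists_isCompl_shearSummand (hc : IsCompl (range φ) c) :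
    ∃ d, IsCompl (shearSummand φ c) d := by
  let θ := (LinearEquiv.refl R A).skewProd (LinearEquiv.refl R A) φ
  have hθ : ((⊤ : Submodule R A).prod c).map (θ : A × A →ₗ[R] A × A) = shearSummand φ c := by
    ext p
    simp [mem_map_equiv, θ, LinearEquiv.skewProd_symm_apply, mem_shearSummand]
  refine ⟨(prod ⊥ (range φ)).map (θ : A × A →ₗ[R] A × A), ?_⟩
  rw [← hθ]
  exact (orderIsoMapComap θ).isCompl (isCompl_prod isCompl_top_bot hc.symm)

lemma range_inl_sup_shearSummand (hc : Codisjoint (range φ) c) :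
    range (inl R A A) ⊔ shearSummand φ c = ⊤ := by
  rw [eq_top_iff]
  rintro ⟨x, y⟩ -
  obtain ⟨_, ⟨z, rfl⟩, w, hw, rfl⟩ := mem_sup.mp (hc.eq_top ▸ mem_top : y ∈ range φ ⊔ c)
  have hsplit : ((x, φ z + w) : A × A) = inl R A A (x - z) + (z, φ z + w) := by simp
  rw [hsplit]
  exact add_mem_sup (mem_range_self _ _) (by simpa [mem_shearSummand] using hw)

lemma range_inl_inf_shearSummand (hc : Disjoint (range φ) c) :
    range (inl R A A) ⊓ shearSummand φ c = (ker φ).map (inl R A A) := by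
  ext ⟨x, y⟩
  simp only [mem_inf, mem_range, inl_apply, Prod.mk.injEq, mem_map, mem_ker, mem_shearSummand]
  constructor
  · rintro ⟨⟨x, rfl, rfl⟩, hx⟩
    have : φ x ∈ range φ ⊓ c := ⟨mem_range_self φ x, by simpa using neg_mem hx⟩
    rw [hc.eq_bot, mem_bot] at this
    exact ⟨x, this, rfl, rfl⟩
  · rintro ⟨x, hx, rfl, rfl⟩
    exact ⟨⟨x, rfl, rfl⟩, by simp [hx]⟩

end Shear

lemma IsDualRickart.isRickart_s15 {A : Type*} [AddCommGroup A] [Module R A]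
    (hA : IsDualRickart R A) (hD3 : D3Cond R (A × A)) : IsRickart R A := by
  intro φ
  obtain ⟨c, hc⟩ := hA φ
  obtain ⟨d, hd⟩ := hD3 _ _ ⟨_, LinearMap.isCompl_range_inl_inr⟩
    (exists_isCompl_shearSummand hc) (range_inl_sup_shearSummand hc.codisjoint)
  rw [range_inl_inf_shearSummand hc.disjoint] at hd
  exact ⟨_, Submodule.isCompl_comap_of_isCompl_map_s15 LinearMap.inl_injective hd⟩

/-- A Σ-D3, Σ-dual Rickart module is Σ-Rickart. -/
theorem stmt15 (R : Type u) [Ring R] (M : Type v) [AddCommGroup M] [Module R M]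
    (hD3 : ∀ Λ : Type v, D3Cond R (Λ →₀ M)) (hM : IsSigmaDualRickart R M) :
    IsSigmaRickart R M :=
  fun Λ ↦ (hM Λ).isRickart_s15
    ((hD3 (Λ ⊕ Λ)).of_linearEquiv (Finsupp.sumFinsuppLEquivProdFinsupp R))
end

section
/- If M is a Σ-dual Rickart R-module, then its endomorphism ring S = End_R(M) is semi-hereditary, i.e., every finitely generated one-sided ideal of S is projective as an S-module. -/
/-!
Let `S = End_R M` and let `t : ι → S` be a finite family. The left ideal generated by `t` consists
of the composites `g ∘ Φ`, where `Φ = (t i)ᵢ : M → M^(ι)` and `g : M^(ι) → M`; since `Φ` maps onto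
`P = range Φ`, this identifies the ideal with `Hom_R(P, M)`. Precomposing `Φ` with a coordinate
projection exhibits `P` as the image of an endomorphism of `M^(ι)`, so `P` is a direct summand
when `M` is Σ-dual Rickart. Then `Hom_R(P, M)` is a direct summand of `Hom_R(M^(ι), M) ≅ S^ι`.
-/

universe u v

open LinearMap Submodule

section Complement

variable {R S M N : Type*} [Ring R] [Semiring S] [AddCommGroup M] [Module R M] [Module S M]
  [SMulCommClass R S M] [AddCommGroup N] [Module R N] {p q : Submodule R N}

theorem LinearMap.lcomp_subtype_surjective_of_isCompl (h : IsCompl p q) :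
    Function.Surjective (lcomp S M p.subtype) :=
  fun g => ⟨g ∘ₗ p.projectionOnto q h, by ext; simp⟩

theorem Module.Projective.linearMap_of_isCompl (h : IsCompl p q)
    [Module.Projective S (N →ₗ[R] M)] : Module.Projective S (p →ₗ[R] M) :=
  .of_split (lcomp S M (p.projectionOnto q h)) (lcomp S M p.subtype) (by ext; simp)

end Complement

instance Module.projective_finsupp_linearMap_end {R M ι : Type*} [Semiring R] [AddCommMonoid M]
    [Module R M] [Finite ι] : Module.Projective (Module.End R M) ((ι →₀ M) →ₗ[R] M) :=
  .of_equiv' (Finsupp.lsum (Module.End R M))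

section FinsuppPi

variable {R M N ι : Type*} [Semiring R] [AddCommMonoid M] [Module R M] [AddCommMonoid N]
  [Module R N] [Fintype ι]

noncomputable def LinearMap.finsuppPi (t : ι → M →ₗ[R] N) : M →ₗ[R] ι →₀ N :=
  ∑ i, Finsupp.lsingle i ∘ₗ t i

theorem LinearMap.comp_finsuppPi {P : Type*} [AddCommMonoid P] [Module R P]
    (t : ι → M →ₗ[R] N) (g : (ι →₀ N) →ₗ[R] P) :
    g ∘ₗ finsuppPi t = ∑ i, (g ∘ₗ Finsupp.lsingle i) ∘ₗ t i := by
  ext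
  simp [finsuppPi]

theorem LinearMap.range_lcomp_finsuppPi (t : ι → Module.End R M) :
    range (lcomp (Module.End R M) M (finsuppPi t)) = span (Module.End R M) (Set.range t) := by
  apply le_antisymm
  · rintro _ ⟨g, rfl⟩
    rw [lcomp_apply', comp_finsuppPi]
    exact sum_mem fun i _ => smul_mem _ (g ∘ₗ Finsupp.lsingle i) (subset_span ⟨i, rfl⟩)
  · refine span_le.mpr ?_
    rintro _ ⟨i, rfl⟩
    refine ⟨Finsupp.lapply i, ?_⟩
    classical
    ext
    simp [lcomp_apply', comp_finsuppPi, Finsupp.single_apply]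

end FinsuppPi

theorem Module.projective_span_of_isCompl_range_finsuppPi {R M ι : Type*} [Ring R]
    [AddCommGroup M] [Module R M] [Fintype ι] (t : ι → Module.End R M)
    {q : Submodule R (ι →₀ M)} (hq : IsCompl (range (finsuppPi t)) q) :
    Module.Projective (Module.End R M) (span (Module.End R M) (Set.range t)) := by
  let S := Module.End R M
  let Φ := finsuppPi t
  have : Module.Projective S (range Φ →ₗ[R] M) := .linearMap_of_isCompl hq
  have hrange : range (lcomp S M Φ.rangeRestrict) = span S (Set.range t) := by
    rw [← range_lcomp_finsuppPi, ← range_comp_of_range_eq_top _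
      (range_eq_top.mpr (lcomp_subtype_surjective_of_isCompl hq))]
    rfl
  exact .of_equiv' <| (LinearEquiv.ofInjective _
    (lcomp_injective_of_surjective _ Φ.surjective_rangeRestrict)).trans (.ofEq _ _ hrange)

/-- The endomorphism ring of a Σ-dual Rickart module is (left) semi-hereditary:
every finitely generated one-sided ideal is projective. -/
theorem stmt17 (R : Type u) [Ring R] (M : Type v) [AddCommGroup M] [Module R M]
    (hM : IsSigmaDualRickart R M) :
    ∀ I : Ideal (Module.End R M), I.FG → Module.Projective (Module.End R M) I := by
  rintro I ⟨T, rfl⟩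
  -- the index `none` provides a coordinate to project onto even when `T` is empty
  let t : Option T → Module.End R M := fun o => o.elim 0 Subtype.val
  have hspan : span (Module.End R M) (Set.range t) = span _ T := by
    rw [Option.range_elim, Subtype.range_coe, span_insert_zero]
  obtain ⟨q, hq⟩ := hM (Option T) (finsuppPi t ∘ₗ Finsupp.lapply none)
  rw [range_comp_of_range_eq_top _ (range_eq_top.mpr fun m => ⟨Finsupp.single none m, by simp⟩)]
    at hq
  rw [Ideal.span, ← hspan]
  exact Module.projective_span_of_isCompl_range_finsuppPi t hq
end

section
/- If M is a projective Σ-dual Rickart R-module, then its endomorphism ring S = End_R(M) is von Neumann regular; that is, for every f ∈ End_R(M) there exists g ∈ End_R(M) with f ∘ g ∘ f = f. -/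
/-! The image of `f` is a direct summand of `M`, so there is a projection `π : M → f(M)`. Since `M`
is projective, `π` lifts through the surjection `M → f(M)` induced by `f` to an endomorphism `g`
with `f ∘ g = π`, and then `f g f = π f = f`. -/

universe u v

section
variable {R : Type u} [Ring R] {M : Type v} [AddCommGroup M] [Module R M]

theorem IsDualRickart.of_linearEquiv_s19 {N : Type*} [AddCommGroup N] [Module R N]
    (hM : IsDualRickart R M) (e : M ≃ₗ[R] N) : IsDualRickart R N := by
  intro φ
  obtain ⟨q, hq⟩ := hM ((e.symm : N →ₗ[R] M) ∘ₗ φ ∘ₗ (e : M →ₗ[R] N))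
  rw [LinearMap.range_comp, LinearMap.range_comp_of_range_eq_top _ e.range] at hq
  refine ⟨q.map (e : M →ₗ[R] N), ?_⟩
  simpa [← Submodule.map_comp] using (Submodule.orderIsoMapComap e).isCompl hq

theorem IsSigmaDualRickart.isDualRickart (hM : IsSigmaDualRickart R M) : IsDualRickart R M :=
  (hM PUnit).of_linearEquiv_s19 (Finsupp.uniqueLinearEquiv R M PUnit.unit)

theorem Module.End.exists_mul_mul_eq_self_of_isCompl_range [Module.Projective R M]
    {f : Module.End R M} {q : Submodule R M} (hq : IsCompl (LinearMap.range f) q) :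
    ∃ g : Module.End R M, f * g * f = f := by
  obtain ⟨g, hg⟩ := Module.projective_lifting_property f.rangeRestrict
    ((LinearMap.range f).projectionOnto q hq) f.surjective_rangeRestrict
  refine ⟨g, LinearMap.ext fun m => ?_⟩
  have hfgf : f.rangeRestrict (g (f m)) = ⟨f m, LinearMap.mem_range_self f m⟩ := by
    rw [← LinearMap.comp_apply, hg]
    exact Submodule.projectionOnto_apply_left hq ⟨f m, _⟩
  simpa using congrArg Subtype.val hfgf

theorem IsDualRickart.exists_mul_mul_eq_self [Module.Projective R M] (hM : IsDualRickart R M)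
    (f : Module.End R M) : ∃ g : Module.End R M, f * g * f = f :=
  have ⟨_, hq⟩ := hM f
  Module.End.exists_mul_mul_eq_self_of_isCompl_range hq
end

/-- The endomorphism ring of a projective Σ-dual Rickart module is von Neumann regular. -/
theorem stmt19 (R : Type u) [Ring R] (M : Type v) [AddCommGroup M] [Module R M]
    [Module.Projective R M] (hM : IsSigmaDualRickart R M) :
    ∀ f : Module.End R M, ∃ g : Module.End R M, f * g * f = f :=
  hM.isDualRickart.exists_mul_mul_eq_self
end
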